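/- For the Laplace random walk, the expected exit time from the strip [0,ρ] is exactly E[τ] = 1 + ρ/√2; equivalently, the per-block trade probability P_trade = 1/E[τ] equals (1 + ρ/√2)^{−1}. -/

import Mathlib

open MeasureTheory ProbabilityTheory Real Filter

/-- The Laplace law with density `(1/√2) · exp (−√2 |x|)` (mean 0, variance 1). -/
noncomputable def laplaceMeasure : Measure ℝ :=
  volume.withDensity
    (fun x => ENNReal.ofReal ((1 / Real.sqrt 2) * Real.exp (-(Real.sqrt 2) * |x|)))

/-- First exit time of the walk `S` from the strip `[0, ρ]`. -/
noncomputable def exitTime {Ω : Type*} (S : ℕ → Ω → ℝ) (ρ : ℝ) (ω : Ω) : ℕ :=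
  sInf {n | 0 < n ∧ (S n ω < 0 ∨ ρ < S n ω)}

/-- First passage time of the walk `S` below `0`. -/
noncomputable def hitLow {Ω : Type*} (S : ℕ → Ω → ℝ) (ω : Ω) : ℕ :=
  sInf {n | 0 < n ∧ S n ω < 0}

/-- First passage time of the walk `S` above `ρ`. -/
noncomputable def hitHigh {Ω : Type*} (S : ℕ → Ω → ℝ) (ρ : ℝ) (ω : Ω) : ℕ :=
  sInf {n | 0 < n ∧ ρ < S n ω}

/-!
If `h ≥ 0` is bounded on the strip `[0, ρ]` and solves the Poisson equation
`h x = 1 + E[h (x + Y); x + Y ∈ [0, ρ]]` there, then `a n = E[h (S n); τ > n]` satisfies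
`a (n + 1) = a n - P(τ > n)` by the Markov property of the walk, and `0 ≤ a n ≤ C · P(τ > n)`.
Telescoping gives `E[τ] = ∑ P(τ > n) = a 0 = h 0`; the bounded partial sums already force
`P(τ > n) → 0`, so `τ < ∞` almost surely comes for free. For Laplace steps,
`h x = 1 + ρ/√2 + x (ρ - x)` solves the Poisson equation, by integrating polynomials against
`exp (± √2 y)`.
-/

open Set Function
open scoped ENNReal Topology

theorem hasSum_of_sub_eq_of_le_mul {a b : ℕ → ℝ} {C : ℝ} (hstep : ∀ n, a (n + 1) = a n - b n)
    (ha : ∀ n, 0 ≤ a n) (hb : ∀ n, 0 ≤ b n) (hab : ∀ n, a n ≤ C * b n) : HasSum b (a 0) := by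
  have hpartial : ∀ N, ∑ n ∈ Finset.range N, b n = a 0 - a N := fun N => by
    rw [← Finset.sum_range_sub']
    exact Finset.sum_congr rfl fun n _ => by rw [hstep]; ring
  have hb0 : Tendsto b atTop (𝓝 0) :=
    (summable_of_sum_range_le hb fun N => by linarith [hpartial N, ha N]).tendsto_atTop_zero
  have ha0 : Tendsto a atTop (𝓝 0) := by
    simpa using squeeze_zero ha hab (by simpa using hb0.const_mul C)
  rw [hasSum_iff_tendsto_nat_of_nonneg hb]
  simpa [hpartial] using tendsto_const_nhds.sub ha0

theorem lintegral_natCast_eq_tsum_measure_lt {Ω : Type*} [MeasurableSpace Ω] {P : Measure Ω}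
    {f : Ω → ℕ} (hf : Measurable f) : ∫⁻ ω, (f ω : ℝ≥0∞) ∂P = ∑' n : ℕ, P {ω | n < f ω} := by
  have hset : ∀ n : ℕ, MeasurableSet {ω | n < f ω} := fun n => hf measurableSet_Ioi
  calc ∫⁻ ω, (f ω : ℝ≥0∞) ∂P = ∫⁻ ω, ∑' n : ℕ, {ω | n < f ω}.indicator 1 ω ∂P := by
        congr 1 with ω
        rw [tsum_eq_sum (s := Finset.range (f ω)) fun n hn => by simpa using hn,
          Finset.sum_congr rfl fun n hn =>
            indicator_of_mem (show ω ∈ {ω | n < f ω} from Finset.mem_range.1 hn) 1]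
        simp
    _ = ∑' n : ℕ, P {ω | n < f ω} := by
        rw [lintegral_tsum fun n => (measurable_one.indicator (hset n)).aemeasurable]
        simp_rw [lintegral_indicator_one (hset _)]

theorem ProbabilityTheory.IndepFun.integral_comp_eq_integral_integral_map {Ω β γ : Type*}
    [MeasurableSpace Ω] [MeasurableSpace β] [MeasurableSpace γ] {P : Measure Ω}
    [IsFiniteMeasure P] {W : Ω → β} {Y : Ω → γ} (hW : Measurable W) (hY : Measurable Y)
    (hind : IndepFun W Y P) {F : β → γ → ℝ} (hF : Measurable (uncurry F))
    (hint : Integrable (fun ω => F (W ω) (Y ω)) P) :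
    ∫ ω, F (W ω) (Y ω) ∂P = ∫ ω, ∫ y, F (W ω) y ∂(P.map Y) ∂P := by
  have hmap := (indepFun_iff_map_prod_eq_prod_map_map hW.aemeasurable hY.aemeasurable).1 hind
  have hint' : Integrable (uncurry F) ((P.map W).prod (P.map Y)) := by
    rw [← hmap]
    exact (integrable_map_measure hF.aestronglyMeasurable (hW.prodMk hY).aemeasurable).2 hint
  calc ∫ ω, F (W ω) (Y ω) ∂P = ∫ p, uncurry F p ∂(P.map fun ω => (W ω, Y ω)) :=
        (integral_map (hW.prodMk hY).aemeasurable hF.aestronglyMeasurable).symm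
    _ = ∫ w, ∫ y, F w y ∂(P.map Y) ∂(P.map W) := by rw [hmap, integral_prod _ hint']; rfl
    _ = ∫ ω, ∫ y, F (W ω) y ∂(P.map Y) ∂P :=
        integral_map hW.aemeasurable hint'.integral_prod_left.aestronglyMeasurable

section StayedIn

variable {Ω : Type*} {S : ℕ → Ω → ℝ} {s : Set ℝ}

variable (S s) in
def stayedIn (n : ℕ) : Set Ω := ⋂ k ∈ Finset.Icc 1 n, S k ⁻¹' s

theorem mem_stayedIn {n : ℕ} {ω : Ω} :
    ω ∈ stayedIn S s n ↔ ∀ k ∈ Finset.Icc 1 n, S k ω ∈ s := by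
  simp [stayedIn]

theorem stayedIn_succ (n : ℕ) : stayedIn S s (n + 1) = stayedIn S s n ∩ S (n + 1) ⁻¹' s := by
  rw [stayedIn, ← Finset.insert_Icc_right_eq_Icc_add_one (by omega), Finset.set_biInter_insert,
    inter_comm, stayedIn]

theorem apply_mem_of_mem_stayedIn {n : ℕ} {ω : Ω} (h0 : S 0 ω ∈ s) (hω : ω ∈ stayedIn S s n) :
    S n ω ∈ s := by
  rcases Nat.eq_zero_or_pos n with rfl | hn
  · exact h0
  · exact mem_stayedIn.1 hω n (Finset.mem_Icc.2 ⟨hn, le_rfl⟩)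

theorem measurableSet_stayedIn {m : MeasurableSpace Ω} {n : ℕ}
    (hS : ∀ k ≤ n, Measurable (S k)) (hs : MeasurableSet s) : MeasurableSet (stayedIn S s n) :=
  .biInter (Finset.countable_toSet _) fun k hk => hS k (Finset.mem_Icc.1 hk).2 hs

/- Paths that never leave the strip have `exitTime = sInf ∅ = 0`; they are the removed set. -/
theorem setOf_lt_exitTime {ρ : ℝ} (n : ℕ) :
    {ω | n < exitTime S ρ ω} = stayedIn S (Icc 0 ρ) n \ ⋂ m, stayedIn S (Icc 0 ρ) m := by
  ext ω
  set T := {k | 0 < k ∧ (S k ω < 0 ∨ ρ < S k ω)}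
  have hT : ∀ k, k ∈ T ↔ 0 < k ∧ S k ω ∉ Icc 0 ρ := fun k => by
    simp only [T, mem_ofPred_eq, mem_Icc, not_and_or, not_le]
  have hstay : ∀ n, ω ∈ stayedIn S (Icc 0 ρ) n ↔ ∀ k ≤ n, k ∉ T := fun n => by
    simp only [mem_stayedIn, Finset.mem_Icc, hT]
    exact forall_congr' fun k => by tauto
  change n < sInf T ↔ _
  simp only [Set.mem_sdiff, mem_iInter, hstay, not_forall]
  constructor
  · intro h
    have hne : T.Nonempty := by
      by_contra hempty
      rw [not_nonempty_iff_eq_empty.1 hempty, Nat.sInf_empty] at h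
      omega
    exact ⟨fun k hk hkT => by have := Nat.sInf_le hkT; omega,
      hne.some, hne.some, le_rfl, not_not.2 hne.some_mem⟩
  · rintro ⟨hn, m, k, -, hk⟩
    by_contra! hle
    exact hn _ hle (Nat.sInf_mem ⟨k, not_not.1 hk⟩)

theorem measurable_exitTime [MeasurableSpace Ω] (hS : ∀ k, Measurable (S k)) (ρ : ℝ) :
    Measurable (exitTime S ρ) :=
  measurable_of_Ioi fun n => by
    have hA : ∀ m, MeasurableSet (stayedIn S (Icc 0 ρ) m) := fun m =>
      measurableSet_stayedIn (fun k _ => hS k) measurableSet_Icc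
    change MeasurableSet {ω | n < exitTime S ρ ω}
    rw [setOf_lt_exitTime]
    exact (hA n).diff (.iInter hA)

end StayedIn

section Walk

variable {Ω : Type*} {X : ℕ → Ω → ℝ} {S : ℕ → Ω → ℝ}

abbrev pastMeasurableSpace (X : ℕ → Ω → ℝ) (n : ℕ) : MeasurableSpace Ω :=
  ⨆ i ∈ Iio n, MeasurableSpace.comap (X i) inferInstance

theorem pastMeasurableSpace_le [MeasurableSpace Ω] (hmeas : ∀ i, Measurable (X i)) (n : ℕ) :
    pastMeasurableSpace X n ≤ ‹MeasurableSpace Ω› :=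
  iSup₂_le fun i _ => (hmeas i).comap_le

theorem measurable_pastMeasurableSpace_of_le (hS : ∀ n ω, S n ω = ∑ i ∈ Finset.range n, X i ω)
    {k n : ℕ} (hk : k ≤ n) : Measurable[pastMeasurableSpace X n] (S k) := by
  rw [funext (hS k)]
  refine Finset.measurable_sum _ fun i hi => Measurable.of_comap_le ?_
  exact le_iSup₂ (f := fun i (_ : i ∈ Iio n) => MeasurableSpace.comap (X i) inferInstance) i
    (show i < n by simp at hi; omega)

theorem measurable_of_eq_sum_range [MeasurableSpace Ω] (hmeas : ∀ i, Measurable (X i))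
    (hS : ∀ n ω, S n ω = ∑ i ∈ Finset.range n, X i ω) (k : ℕ) : Measurable (S k) :=
  (measurable_pastMeasurableSpace_of_le hS le_rfl).mono (pastMeasurableSpace_le hmeas k) le_rfl

theorem ProbabilityTheory.iIndepFun.indepFun_of_measurable_pastMeasurableSpace
    [MeasurableSpace Ω] {P : Measure Ω} {β : Type*} [MeasurableSpace β]
    (hmeas : ∀ i, Measurable (X i)) (hindep : iIndepFun X P) {n : ℕ} {W : Ω → β}
    (hW : Measurable[pastMeasurableSpace X n] W) : IndepFun W (X n) P := by
  rw [IndepFun_iff_Indep]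
  have h := indep_iSup_of_disjoint (fun i => (hmeas i).comap_le)
    ((iIndepFun_iff_iIndep _ _ _).1 hindep) (S := Iio n) (T := {n}) (by simp)
  rw [iSup_singleton] at h
  exact indep_of_indep_of_le_left h hW.comap_le

theorem setIntegral_stayedIn_comp_succ [MeasurableSpace Ω] {P : Measure Ω} [IsFiniteMeasure P]
    (hmeas : ∀ i, Measurable (X i)) (hindep : iIndepFun X P) {μ : Measure ℝ}
    (hlaw : ∀ i, P.map (X i) = μ) (hS : ∀ n ω, S n ω = ∑ i ∈ Finset.range n, X i ω)
    {s : Set ℝ} (hs : MeasurableSet s) {g : ℝ → ℝ} (hg : Measurable g) {C : ℝ}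
    (hC : ∀ x, |g x| ≤ C) (n : ℕ) :
    ∫ ω in stayedIn S s n, g (S (n + 1) ω) ∂P
      = ∫ ω in stayedIn S s n, ∫ y, g (S n ω + y) ∂μ ∂P := by
  set A := stayedIn S s n
  have hle := pastMeasurableSpace_le hmeas n
  have hpast : ∀ k ≤ n, Measurable[pastMeasurableSpace X n] (S k) := fun _ hk =>
    measurable_pastMeasurableSpace_of_le hS hk
  have hA : MeasurableSet[pastMeasurableSpace X n] A := measurableSet_stayedIn hpast hs
  -- the past enters only through the pair `(𝟙_A, S n)`, which is independent of `X n`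
  have hW : Measurable[pastMeasurableSpace X n] fun ω => (A.indicator (1 : Ω → ℝ) ω, S n ω) :=
    (measurable_const.indicator hA).prodMk (hpast n le_rfl)
  have hW' := hW.mono hle le_rfl
  have hint : Integrable (fun ω => A.indicator (1 : Ω → ℝ) ω * g (S n ω + X n ω)) P := by
    refine .of_bound (hW'.fst.mul (hg.comp (hW'.snd.add (hmeas n)))).aestronglyMeasurable C
      (ae_of_all _ fun ω => ?_)
    by_cases hω : ω ∈ A <;> simp [hω, (abs_nonneg _).trans (hC 0), hC]
  have hfreeze := (iIndepFun.indepFun_of_measurable_pastMeasurableSpace hmeas hindep hW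
    ).integral_comp_eq_integral_integral_map hW' (hmeas n) (F := fun w y => w.1 * g (w.2 + y))
      (by fun_prop) hint
  rw [hlaw] at hfreeze
  rw [← integral_indicator (hle _ hA), ← integral_indicator (hle _ hA)]
  convert hfreeze using 2 <;> ext ω <;> by_cases hω : ω ∈ A <;>
    simp [hω, hS, Finset.sum_range_succ]

end Walk

section Poisson

variable {Ω : Type*} [MeasurableSpace Ω] {P : Measure Ω} [IsProbabilityMeasure P]
  {X : ℕ → Ω → ℝ} {μ : Measure ℝ} {S : ℕ → Ω → ℝ} {ρ : ℝ} {h : ℝ → ℝ} {C : ℝ}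

theorem setIntegral_stayedIn_succ_of_poisson (hmeas : ∀ i, Measurable (X i))
    (hindep : iIndepFun X P) (hlaw : ∀ i, P.map (X i) = μ)
    (hS : ∀ n ω, S n ω = ∑ i ∈ Finset.range n, X i ω) (hρ : 0 ≤ ρ) (hh : Measurable h)
    (h_nonneg : ∀ x ∈ Icc 0 ρ, 0 ≤ h x) (h_le : ∀ x ∈ Icc 0 ρ, h x ≤ C)
    (hpoisson : ∀ x ∈ Icc 0 ρ, ∫ y, (Icc 0 ρ).indicator h (x + y) ∂μ = h x - 1) (n : ℕ) :
    ∫ ω in stayedIn S (Icc 0 ρ) (n + 1), h (S (n + 1) ω) ∂P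
      = ∫ ω in stayedIn S (Icc 0 ρ) n, h (S n ω) ∂P - P.real (stayedIn S (Icc 0 ρ) n) := by
  have hSmeas := measurable_of_eq_sum_range hmeas hS
  have hA := measurableSet_stayedIn (s := Icc 0 ρ) (n := n) (fun k _ => hSmeas k) measurableSet_Icc
  have hmem : ∀ ω ∈ stayedIn S (Icc 0 ρ) n, S n ω ∈ Icc 0 ρ := fun ω =>
    apply_mem_of_mem_stayedIn (by simp [hS, hρ])
  have hint : IntegrableOn (fun ω => h (S n ω)) (stayedIn S (Icc 0 ρ) n) P :=
    Measure.integrableOn_of_bounded (measure_ne_top _ _) (hh.comp (hSmeas n)).aestronglyMeasurable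
      ((ae_restrict_iff' hA).2 (ae_of_all _ fun ω hω => by
        rw [Real.norm_of_nonneg (h_nonneg _ (hmem ω hω))]; exact h_le _ (hmem ω hω)))
  have hbound : ∀ x, |(Icc 0 ρ).indicator h x| ≤ C := fun x => by
    by_cases hx : x ∈ Icc 0 ρ
    · simpa [hx, abs_of_nonneg (h_nonneg x hx)] using h_le x hx
    · simpa [hx] using (h_nonneg 0 ⟨le_rfl, hρ⟩).trans (h_le 0 ⟨le_rfl, hρ⟩)
  calc _ = ∫ ω in stayedIn S (Icc 0 ρ) n, (Icc 0 ρ).indicator h (S (n + 1) ω) ∂P := by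
        rw [stayedIn_succ, ← setIntegral_indicator (hSmeas _ measurableSet_Icc)]
        simp_rw [← comp_apply (f := h), indicator_comp_right]
    _ = ∫ ω in stayedIn S (Icc 0 ρ) n, (h (S n ω) - 1) ∂P := by
        rw [setIntegral_stayedIn_comp_succ hmeas hindep hlaw hS measurableSet_Icc
          (hh.indicator measurableSet_Icc) hbound]
        exact setIntegral_congr_fun hA fun ω hω => hpoisson _ (hmem ω hω)
    _ = _ := by
        rw [integral_sub hint (integrableOn_const (measure_ne_top _ _)), setIntegral_const,
          smul_eq_mul, mul_one]

theorem hasSum_measureReal_stayedIn_of_poisson (hmeas : ∀ i, Measurable (X i))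
    (hindep : iIndepFun X P) (hlaw : ∀ i, P.map (X i) = μ)
    (hS : ∀ n ω, S n ω = ∑ i ∈ Finset.range n, X i ω) (hρ : 0 ≤ ρ) (hh : Measurable h)
    (h_nonneg : ∀ x ∈ Icc 0 ρ, 0 ≤ h x) (h_le : ∀ x ∈ Icc 0 ρ, h x ≤ C)
    (hpoisson : ∀ x ∈ Icc 0 ρ, ∫ y, (Icc 0 ρ).indicator h (x + y) ∂μ = h x - 1) :
    HasSum (fun n => P.real (stayedIn S (Icc 0 ρ) n)) (h 0) := by
  have hA : ∀ n, MeasurableSet (stayedIn S (Icc 0 ρ) n) := fun n =>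
    measurableSet_stayedIn (fun k _ => measurable_of_eq_sum_range hmeas hS k) measurableSet_Icc
  have hmem : ∀ n, ∀ ω ∈ stayedIn S (Icc 0 ρ) n, S n ω ∈ Icc 0 ρ := fun n ω =>
    apply_mem_of_mem_stayedIn (by simp [hS, hρ])
  have h0 : ∫ ω in stayedIn S (Icc 0 ρ) 0, h (S 0 ω) ∂P = h 0 := by simp [stayedIn, hS]
  rw [← h0]
  refine hasSum_of_sub_eq_of_le_mul (C := C)
    (setIntegral_stayedIn_succ_of_poisson hmeas hindep hlaw hS hρ hh h_nonneg h_le hpoisson)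
    (fun n => setIntegral_nonneg (hA n) fun ω hω => h_nonneg _ (hmem n ω hω))
    (fun n => measureReal_nonneg) fun n => ?_
  refine (Real.le_norm_self _).trans (norm_setIntegral_le_of_norm_le_const (measure_lt_top _ _)
    fun ω hω => ?_)
  rw [Real.norm_of_nonneg (h_nonneg _ (hmem n ω hω))]
  exact h_le _ (hmem n ω hω)

theorem integral_exitTime_eq_of_poisson (hmeas : ∀ i, Measurable (X i))
    (hindep : iIndepFun X P) (hlaw : ∀ i, P.map (X i) = μ)
    (hS : ∀ n ω, S n ω = ∑ i ∈ Finset.range n, X i ω) (hρ : 0 ≤ ρ) (hh : Measurable h)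
    (h_nonneg : ∀ x ∈ Icc 0 ρ, 0 ≤ h x) (h_le : ∀ x ∈ Icc 0 ρ, h x ≤ C)
    (hpoisson : ∀ x ∈ Icc 0 ρ, ∫ y, (Icc 0 ρ).indicator h (x + y) ∂μ = h x - 1) :
    ∫ ω, (exitTime S ρ ω : ℝ) ∂P = h 0 := by
  have hsum := hasSum_measureReal_stayedIn_of_poisson hmeas hindep hlaw hS hρ hh h_nonneg h_le
    hpoisson
  have hτ := measurable_exitTime (measurable_of_eq_sum_range hmeas hS) ρ
  have hnull : P (⋂ m, stayedIn S (Icc 0 ρ) m) = 0 := by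
    rw [← measureReal_eq_zero_iff]
    refine le_antisymm (ge_of_tendsto' hsum.summable.tendsto_atTop_zero fun n => ?_)
      measureReal_nonneg
    exact measureReal_mono (iInter_subset _ n)
  have hlint : ∫⁻ ω, (exitTime S ρ ω : ℝ≥0∞) ∂P = ENNReal.ofReal (h 0) := by
    rw [lintegral_natCast_eq_tsum_measure_lt hτ, ← hsum.tsum_eq,
      ENNReal.ofReal_tsum_of_nonneg (fun n => measureReal_nonneg) hsum.summable]
    congr 1 with n
    rw [setOf_lt_exitTime, measure_sdiff_null hnull, ofReal_measureReal]
  rw [integral_eq_lintegral_of_nonneg_ae (ae_of_all _ fun ω => Nat.cast_nonneg _)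
      (Measurable.of_discrete.comp hτ).aestronglyMeasurable]
  simp_rw [ENNReal.ofReal_natCast, hlint]
  exact ENNReal.toReal_ofReal (h_nonneg 0 ⟨le_rfl, hρ⟩)

end Poisson

theorem integral_laplaceMeasure (g : ℝ → ℝ) :
    ∫ y, g y ∂laplaceMeasure = ∫ y, (1 / √2) * exp (-√2 * |y|) * g y := by
  rw [laplaceMeasure, integral_withDensity_eq_integral_toReal_smul (by fun_prop)
    (ae_of_all _ fun _ => ENNReal.ofReal_lt_top)]
  congr 1 with y
  rw [ENNReal.toReal_ofReal (by positivity), smul_eq_mul]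

theorem integral_laplaceMeasure_indicator_Icc_comp_add {f : ℝ → ℝ} (hf : Continuous f) {ρ x : ℝ}
    (hx : x ∈ Icc 0 ρ) :
    ∫ y, (Icc 0 ρ).indicator f (x + y) ∂laplaceMeasure
      = ((∫ y in (-x)..0, exp (√2 * y) * f (x + y))
          + ∫ y in (0 : ℝ)..(ρ - x), exp (-√2 * y) * f (x + y)) / √2 := by
  have hind : (fun y => 1 / √2 * exp (-√2 * |y|) * (Icc 0 ρ).indicator f (x + y))
      = (Icc (-x) (ρ - x)).indicator fun y => 1 / √2 * exp (-√2 * |y|) * f (x + y) := by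
    ext y
    by_cases hy : y ∈ Icc (-x) (ρ - x)
    · have hxy : x + y ∈ Icc 0 ρ := ⟨by linarith [hy.1], by linarith [hy.2]⟩
      simp [hy, hxy]
    · have hxy : x + y ∉ Icc 0 ρ := fun h => hy ⟨by linarith [h.1], by linarith [h.2]⟩
      simp [hy, hxy]
  have hcont : Continuous fun y => 1 / √2 * exp (-√2 * |y|) * f (x + y) := by fun_prop
  rw [integral_laplaceMeasure, hind, integral_indicator measurableSet_Icc,
    integral_Icc_eq_integral_Ioc, ← intervalIntegral.integral_of_le (by linarith [hx.1, hx.2]),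
    ← intervalIntegral.integral_add_adjacent_intervals (b := 0) (hcont.intervalIntegrable _ _)
      (hcont.intervalIntegrable _ _), add_div]
  congr 1 <;> rw [← intervalIntegral.integral_div] <;> refine intervalIntegral.integral_congr
    fun y hy => ?_
  · rw [uIcc_of_le (by linarith [hx.1])] at hy
    simp only [abs_of_nonpos hy.2, neg_mul_neg]
    ring
  · rw [uIcc_of_le (by linarith [hx.2])] at hy
    simp only [abs_of_nonneg hy.1]
    ring

theorem integral_exp_mul_of_hasDerivAt {c k : ℝ} (hc : c ≠ 0) {Q Q' : ℝ → ℝ}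
    (hQ : ∀ y, HasDerivAt Q (Q' y) y) (hQ' : ∀ y, HasDerivAt Q' k y) (a b : ℝ) :
    ∫ y in a..b, exp (c * y) * Q y
      = exp (c * b) * (Q b / c - Q' b / c ^ 2 + k / c ^ 3)
        - exp (c * a) * (Q a / c - Q' a / c ^ 2 + k / c ^ 3) := by
  have hQc : Continuous Q := continuous_iff_continuousAt.2 fun y => (hQ y).continuousAt
  refine intervalIntegral.integral_eq_sub_of_hasDerivAt
    (f := fun y => exp (c * y) * (Q y / c - Q' y / c ^ 2 + k / c ^ 3)) (fun y _ => ?_)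
    ((by fun_prop : Continuous fun y => exp (c * y) * Q y).intervalIntegrable _ _)
  have hexp : HasDerivAt (fun y => exp (c * y)) (exp (c * y) * c) y := by
    simpa using ((hasDerivAt_id y).const_mul c).exp
  refine (hexp.mul ((((hQ y).div_const c).sub ((hQ' y).div_const (c ^ 2))).add_const
    (k / c ^ 3))).congr_deriv ?_
  simp only [Pi.sub_apply]
  field_simp
  ring

/- The additive constant `1 + ρ / √2` is the one that makes the boundary terms at `y = -x` and
`y = ρ - x` vanish in `integral_laplaceMeasure_indicator_laplaceMeanExitTime`. -/
noncomputable def laplaceMeanExitTime (ρ x : ℝ) : ℝ := 1 + ρ / √2 + x * (ρ - x)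

theorem laplaceMeanExitTime_nonneg {ρ x : ℝ} (hx : x ∈ Icc 0 ρ) : 0 ≤ laplaceMeanExitTime ρ x := by
  have : 0 ≤ ρ / √2 := div_nonneg (hx.1.trans hx.2) (sqrt_nonneg 2)
  unfold laplaceMeanExitTime
  nlinarith [hx.1, hx.2]

theorem laplaceMeanExitTime_le {ρ x : ℝ} (hx : x ∈ Icc 0 ρ) :
    laplaceMeanExitTime ρ x ≤ 1 + ρ / √2 + ρ ^ 2 := by
  unfold laplaceMeanExitTime
  nlinarith [hx.1, hx.2]

theorem integral_laplaceMeasure_indicator_laplaceMeanExitTime {ρ x : ℝ} (hx : x ∈ Icc 0 ρ) :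
    ∫ y, (Icc 0 ρ).indicator (laplaceMeanExitTime ρ) (x + y) ∂laplaceMeasure
      = laplaceMeanExitTime ρ x - 1 := by
  have hs : √2 ≠ 0 := by positivity
  have hs2 : √2 ^ 2 = 2 := sq_sqrt zero_le_two
  have hQ : ∀ y, HasDerivAt (fun y => laplaceMeanExitTime ρ (x + y)) (ρ - 2 * (x + y)) y :=
    fun y => by
      have h1 := (hasDerivAt_id' y).const_add x
      refine ((h1.mul (h1.const_sub ρ)).const_add (1 + ρ / √2)).congr_deriv ?_
      ring
  have hQ' : ∀ y, HasDerivAt (fun y => ρ - 2 * (x + y)) (-2) y := fun y => by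
    simpa using (((hasDerivAt_id' y).const_add x).const_mul 2).const_sub ρ
  rw [integral_laplaceMeasure_indicator_Icc_comp_add (by unfold laplaceMeanExitTime; fun_prop) hx,
    integral_exp_mul_of_hasDerivAt hs hQ hQ',
    integral_exp_mul_of_hasDerivAt (neg_ne_zero.2 hs) hQ hQ']
  have hleft : laplaceMeanExitTime ρ 0 = 1 + ρ / √2 := by simp [laplaceMeanExitTime]
  have hright : laplaceMeanExitTime ρ (x + (ρ - x)) = 1 + ρ / √2 := by simp [laplaceMeanExitTime]
  simp only [hleft, hright, mul_zero, exp_zero, one_mul, add_zero, add_neg_cancel]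
  field_simp
  linear_combination (√2 ^ 2 + 2 - laplaceMeanExitTime ρ x * √2 ^ 2 - exp (-(√2 * x))
    - exp (-(√2 * (ρ - x)))) * hs2

theorem laplace_expected_exit_time
    {Ω : Type*} [MeasurableSpace Ω] (P : Measure Ω) [IsProbabilityMeasure P]
    (X : ℕ → Ω → ℝ) (hmeas : ∀ i, Measurable (X i))
    (hindep : iIndepFun X P)
    (hlaw : ∀ i, Measure.map (X i) P = laplaceMeasure)
    (S : ℕ → Ω → ℝ) (hS : ∀ n ω, S n ω = ∑ i ∈ Finset.range n, X i ω)
    (ρ : ℝ) (hρ : 0 < ρ)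
    (τ : Ω → ℕ) (hτ : ∀ ω, τ ω = exitTime S ρ ω) :
    ∫ ω, (τ ω : ℝ) ∂P = 1 + ρ / Real.sqrt 2 ∧
    (∫ ω, (τ ω : ℝ) ∂P)⁻¹ = (1 + ρ / Real.sqrt 2)⁻¹ := by
  have hmain : ∫ ω, (τ ω : ℝ) ∂P = 1 + ρ / Real.sqrt 2 := by
    rw [funext hτ]
    refine (integral_exitTime_eq_of_poisson hmeas hindep hlaw hS hρ.le
      (by unfold laplaceMeanExitTime; fun_prop) (fun x hx => laplaceMeanExitTime_nonneg hx)
      (fun x hx => laplaceMeanExitTime_le hx)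
      (fun x hx => integral_laplaceMeasure_indicator_laplaceMeanExitTime hx)).trans ?_
    simp [laplaceMeanExitTime]
  exact ⟨hmain, by rw [hmain]⟩
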